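/- Suppose each f_i is convex and L_i-smooth and x* is a global minimizer of F (so ∇F(x*) = 0). Then for all x, w ∈ ℝ^d, V_e(p^IS; x, w) ≤ 4L̄(F(x) − F(x*)) + 2L̄·D(w), where D(w) = (1/n)∑_{i=1}^n (1/L_i)‖∇f_i(w) − ∇f_i(x*)‖². -/

import Mathlib

open MeasureTheory Finset
open scoped RealInnerProductSpace BigOperators

abbrev Euc (d : ℕ) := EuclideanSpace ℝ (Fin d)

/-- The finite-sum objective `F(x) = (1/n) ∑ f i x`. -/
noncomputable def avgF {d : ℕ} (n : ℕ) (f : Fin n → Euc d → ℝ) (x : Euc d) : ℝ :=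
  (1 / (n : ℝ)) * ∑ i, f i x

/-- The gradient of the finite-sum objective, `∇F(x) = (1/n) ∑ ∇f i x`. -/
noncomputable def avgG {d : ℕ} (n : ℕ) (f' : Fin n → Euc d → Euc d) (x : Euc d) : Euc d :=
  (1 / (n : ℝ)) • ∑ i, f' i x

/-- The effective sampling variance `V_e(q; x, w)`. -/
noncomputable def Ve {d : ℕ} (n : ℕ) (f' : Fin n → Euc d → Euc d)
    (q : Fin n → ℝ) (x w : Euc d) : ℝ :=
  (1 / (n : ℝ) ^ 2) * ∑ i, (1 / q i) * ‖f' i x - f' i w‖ ^ 2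

/-- The average smoothness constant `L̄ = (1/n) ∑ L i`. -/
noncomputable def Lbar (n : ℕ) (L : Fin n → ℝ) : ℝ := (1 / (n : ℝ)) * ∑ i, L i

/-- The importance sampling distribution `p^IS_i = L i / (n L̄)`. -/
noncomputable def pIS (n : ℕ) (L : Fin n → ℝ) (i : Fin n) : ℝ :=
  L i / ((n : ℝ) * Lbar n L)

/-- `D(w) = (1/n) ∑ (1 / L i) ‖∇f i w - ∇f i x*‖²`. -/
noncomputable def Dfun {d : ℕ} (n : ℕ) (f' : Fin n → Euc d → Euc d) (L : Fin n → ℝ)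
    (xstar w : Euc d) : ℝ :=
  (1 / (n : ℝ)) * ∑ i, (1 / L i) * ‖f' i w - f' i xstar‖ ^ 2

/-!
For convex `L`-smooth `f`, evaluating the convexity lower bound at `y` and the descent-lemma
upper bound at `x` in the point `x - L⁻¹ (∇f x - ∇f y)` gives
`‖∇f x - ∇f y‖² ≤ 2 L (f x - f y - ⟪∇f y, x - y⟫)`. Since `1 / p^IS_i = n L̄ / L_i`, each term of
`V_e` is `L̄ / n` times `‖∇f_i x - ∇f_i w‖² / L_i`; splitting the difference through `∇f_i x*`
bounds this by four Bregman divergences of `f_i` plus twice the `i`-th term of `D(w)`. The Bregman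
divergences of the `f_i` average to that of `F`, which is `F x - F x*` because `∇F x* = 0`.
-/

theorem le_add_deriv_add_half_of_deriv_le {g g' : ℝ → ℝ} {K : ℝ}
    (hg : ∀ t, HasDerivAt g (g' t) t) (hg' : ∀ t ∈ Set.Ico (0 : ℝ) 1, g' t ≤ g' 0 + K * t) :
    g 1 ≤ g 0 + g' 0 + K / 2 := by
  have hB : ∀ t, HasDerivAt (fun t => g 0 + t * g' 0 + K / 2 * t ^ 2) (g' 0 + K * t) t := by
    intro t
    refine (((hasDerivAt_id t).mul_const (g' 0)).const_add (g 0) |>.add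
      ((hasDerivAt_pow 2 t).const_mul (K / 2))).congr_deriv ?_
    simp only [Nat.cast_ofNat]; ring
  have := image_le_of_deriv_right_le_deriv_boundary (a := 0) (b := 1)
    (fun t _ => (hg t).continuousAt.continuousWithinAt) (fun t _ => (hg t).hasDerivWithinAt)
    (by simp) (fun t _ => (hB t).continuousAt.continuousWithinAt)
    (fun t _ => (hB t).hasDerivWithinAt) hg' (Set.right_mem_Icc.2 zero_le_one)
  simpa using this

section Smooth

variable {E : Type*} [NormedAddCommGroup E] [InnerProductSpace ℝ E] [CompleteSpace E]
  {f : E → ℝ} {f' : E → E} {L : ℝ}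

theorem hasDerivAt_comp_add_smul (hf : ∀ x, HasGradientAt f (f' x) x) (x v : E)
    (t : ℝ) : HasDerivAt (fun t : ℝ => f (x + t • v)) ⟪f' (x + t • v), v⟫ t := by
  have hline : HasDerivAt (fun t : ℝ => x + t • v) v t := by
    simpa using ((hasDerivAt_id t).smul_const v).const_add x
  simpa [Function.comp_def] using (hf (x + t • v)).hasFDerivAt.comp_hasDerivAt t hline

theorem le_add_inner_add_sq_of_lipschitz_gradient (hf : ∀ x, HasGradientAt f (f' x) x)
    (hL : ∀ x y, ‖f' x - f' y‖ ≤ L * ‖x - y‖) (x z : E) :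
    f z ≤ f x + ⟪f' x, z - x⟫ + L / 2 * ‖z - x‖ ^ 2 := by
  set v := z - x
  have hderiv_le : ∀ t ∈ Set.Ico (0 : ℝ) 1,
      ⟪f' (x + t • v), v⟫ ≤ ⟪f' (x + (0 : ℝ) • v), v⟫ + L * ‖v‖ ^ 2 * t := by
    intro t ht
    have : ⟪f' (x + t • v) - f' x, v⟫ ≤ L * ‖v‖ ^ 2 * t :=
      calc ⟪f' (x + t • v) - f' x, v⟫ ≤ ‖f' (x + t • v) - f' x‖ * ‖v‖ := real_inner_le_norm _ _
        _ ≤ L * ‖t • v‖ * ‖v‖ := by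
          gcongr; simpa using hL (x + t • v) x
        _ = L * ‖v‖ ^ 2 * t := by rw [norm_smul, Real.norm_of_nonneg ht.1]; ring
    rw [inner_sub_left] at this
    simpa [add_comm] using this
  have := le_add_deriv_add_half_of_deriv_le (hasDerivAt_comp_add_smul hf x v) hderiv_le
  simp only [one_smul, zero_smul, add_zero, v, add_sub_cancel] at this ⊢
  linarith

def bregman (f : E → ℝ) (f' : E → E) (x y : E) : ℝ := f x - f y - ⟪f' y, x - y⟫

theorem sq_norm_sub_le_bregman (hf : ∀ x, HasGradientAt f (f' x) x)
    (hconv : ∀ x y, f x + ⟪f' x, y - x⟫ ≤ f y) (hL₀ : 0 < L)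
    (hL : ∀ x y, ‖f' x - f' y‖ ≤ L * ‖x - y‖) (x y : E) :
    ‖f' x - f' y‖ ^ 2 ≤ 2 * L * bregman f f' x y := by
  set u := f' x - f' y
  set z := x - L⁻¹ • u
  have hlower := hconv y z
  have hupper := le_add_inner_add_sq_of_lipschitz_gradient hf hL x z
  have hzy : z - y = (x - y) - L⁻¹ • u := by simp only [z]; abel
  have hzx : z - x = -(L⁻¹ • u) := by simp only [z]; abel
  rw [hzy, inner_sub_right, real_inner_smul_right] at hlower
  rw [hzx, inner_neg_right, real_inner_smul_right, norm_neg, norm_smul,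
    Real.norm_of_nonneg (inv_nonneg.2 hL₀.le)] at hupper
  have hu : L⁻¹ * ⟪f' x, u⟫ - L⁻¹ * ⟪f' y, u⟫ = L⁻¹ * ‖u‖ ^ 2 := by
    rw [← mul_sub, ← inner_sub_left, real_inner_self_eq_norm_sq]
  have hsq : L / 2 * (L⁻¹ * ‖u‖) ^ 2 = L⁻¹ * ‖u‖ ^ 2 / 2 := by field_simp
  calc ‖u‖ ^ 2 = 2 * L * (L⁻¹ * ‖u‖ ^ 2 / 2) := by field_simp
    _ ≤ 2 * L * bregman f f' x y := by
      gcongr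
      unfold bregman
      linarith

theorem one_div_mul_sq_norm_sub_le (hf : ∀ x, HasGradientAt f (f' x) x)
    (hconv : ∀ x y, f x + ⟪f' x, y - x⟫ ≤ f y) (hL₀ : 0 < L)
    (hL : ∀ x y, ‖f' x - f' y‖ ≤ L * ‖x - y‖) (x y w : E) :
    1 / L * ‖f' x - f' w‖ ^ 2 ≤ 4 * bregman f f' x y + 2 * (1 / L * ‖f' w - f' y‖ ^ 2) := by
  have htri : ‖f' x - f' w‖ ≤ ‖f' x - f' y‖ + ‖f' w - f' y‖ := by
    simpa using norm_sub_le (f' x - f' y) (f' w - f' y)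
  calc 1 / L * ‖f' x - f' w‖ ^ 2
      ≤ 1 / L * (2 * ‖f' x - f' y‖ ^ 2 + 2 * ‖f' w - f' y‖ ^ 2) := by
        gcongr
        nlinarith [add_sq_le (a := ‖f' x - f' y‖) (b := ‖f' w - f' y‖), norm_nonneg (f' x - f' w)]
    _ ≤ 1 / L * (2 * (2 * L * bregman f f' x y) + 2 * ‖f' w - f' y‖ ^ 2) := by
        gcongr
        exact sq_norm_sub_le_bregman hf hconv hL₀ hL x y
    _ = 4 * bregman f f' x y + 2 * (1 / L * ‖f' w - f' y‖ ^ 2) := by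
        field_simp
        ring

end Smooth

theorem IsLocalMin.hasGradientAt_eq_zero {E : Type*} [NormedAddCommGroup E]
    [InnerProductSpace ℝ E] [CompleteSpace E] {f : E → ℝ} {g x : E} (hmin : IsLocalMin f x)
    (hf : HasGradientAt f g x) : g = 0 :=
  (InnerProductSpace.toDual ℝ E).map_eq_zero_iff.1 (hmin.hasFDerivAt_eq_zero hf.hasFDerivAt)

section FiniteSum

variable {d n : ℕ} {f : Fin n → Euc d → ℝ} {f' : Fin n → Euc d → Euc d}

theorem hasGradientAt_avgF {x : Euc d} (hf : ∀ i, HasGradientAt (f i) (f' i x) x) :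
    HasGradientAt (avgF n f) (avgG n f' x) x := by
  rw [hasGradientAt_iff_hasFDerivAt, avgG, map_smul, map_sum]
  exact (HasFDerivAt.fun_sum fun i _ => (hf i).hasFDerivAt).const_mul _

theorem bregman_avgF (x y : Euc d) :
    bregman (avgF n f) (avgG n f') x y = (1 / (n : ℝ)) * ∑ i, bregman (f i) (f' i) x y := by
  simp only [bregman, avgF, avgG, sum_sub_distrib, ← sum_inner, real_inner_smul_left]
  ring

theorem Ve_pIS_eq (L : Fin n → ℝ) (x w : Euc d) :
    Ve n f' (pIS n L) x w = Lbar n L * ((1 / (n : ℝ)) * ∑ i, 1 / L i * ‖f' i x - f' i w‖ ^ 2) := by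
  rcases Nat.eq_zero_or_pos n with rfl | hn
  · simp [Ve]
  have hn' : (n : ℝ) ≠ 0 := by positivity
  simp only [Ve, pIS, one_div_div, mul_sum]
  refine sum_congr rfl fun i _ => ?_
  field_simp

theorem avg_one_div_mul_sq_norm_sub_le {L : Fin n → ℝ}
    (hgrad : ∀ i x, HasGradientAt (f i) (f' i x) x)
    (hconv : ∀ i x y, f i x + ⟪f' i x, y - x⟫ ≤ f i y) (hLpos : ∀ i, 0 < L i)
    (hsmooth : ∀ i x y, ‖f' i x - f' i y‖ ≤ L i * ‖x - y‖) (x y w : Euc d) :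
    (1 / (n : ℝ)) * ∑ i, 1 / L i * ‖f' i x - f' i w‖ ^ 2 ≤
      4 * bregman (avgF n f) (avgG n f') x y + 2 * Dfun n f' L y w :=
  calc (1 / (n : ℝ)) * ∑ i, 1 / L i * ‖f' i x - f' i w‖ ^ 2
      ≤ (1 / (n : ℝ)) * ∑ i, (4 * bregman (f i) (f' i) x y +
          2 * (1 / L i * ‖f' i w - f' i y‖ ^ 2)) := by
        gcongr with i
        exact one_div_mul_sq_norm_sub_le (hgrad i) (hconv i) (hLpos i) (hsmooth i) x y w
    _ = 4 * bregman (avgF n f) (avgG n f') x y + 2 * Dfun n f' L y w := by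
        rw [bregman_avgF, Dfun, sum_add_distrib, ← mul_sum, ← mul_sum]
        ring

end FiniteSum

theorem Ve_pIS_bound_general (d n : ℕ)
    (f : Fin n → Euc d → ℝ) (f' : Fin n → Euc d → Euc d) (L : Fin n → ℝ)
    (hgrad : ∀ i x, HasGradientAt (f i) (f' i x) x)
    (hconv : ∀ i x y, f i x + ⟪f' i x, y - x⟫ ≤ f i y)
    (hLpos : ∀ i, 0 < L i)
    (hsmooth : ∀ i x y, ‖f' i x - f' i y‖ ≤ L i * ‖x - y‖)
    (xstar : Euc d) (hmin : ∀ y, avgF n f xstar ≤ avgF n f y)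
    (x w : Euc d) :
    Ve n f' (pIS n L) x w ≤
      4 * Lbar n L * (avgF n f x - avgF n f xstar) +
      2 * Lbar n L * Dfun n f' L xstar w := by
  have hstat : avgG n f' xstar = 0 :=
    IsLocalMin.hasGradientAt_eq_zero (Filter.Eventually.of_forall hmin)
      (hasGradientAt_avgF fun i => hgrad i xstar)
  have hgap : bregman (avgF n f) (avgG n f') x xstar = avgF n f x - avgF n f xstar := by
    rw [bregman, hstat, inner_zero_left, sub_zero]
  have hLbar : 0 ≤ Lbar n L :=
    mul_nonneg (by positivity) (sum_nonneg fun i _ => (hLpos i).le)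
  have hterms := avg_one_div_mul_sq_norm_sub_le hgrad hconv hLpos hsmooth x xstar w
  rw [hgap] at hterms
  rw [Ve_pIS_eq]
  linarith [mul_le_mul_of_nonneg_left hterms hLbar]

/-- bound on the effective sampling variance under importance sampling. -/
theorem Ve_pIS_bound (d n : ℕ) (hd : 0 < d) (hn : 0 < n)
    (f : Fin n → Euc d → ℝ) (f' : Fin n → Euc d → Euc d) (L : Fin n → ℝ)
    (hgrad : ∀ i x, HasGradientAt (f i) (f' i x) x)
    (hconv : ∀ i x y, f i x + ⟪f' i x, y - x⟫ ≤ f i y)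
    (hLpos : ∀ i, 0 < L i)
    (hsmooth : ∀ i x y, ‖f' i x - f' i y‖ ≤ L i * ‖x - y‖)
    (xstar : Euc d) (hmin : ∀ y, avgF n f xstar ≤ avgF n f y)
    (x w : Euc d) :
    Ve n f' (pIS n L) x w ≤
      4 * Lbar n L * (avgF n f x - avgF n f xstar) +
      2 * Lbar n L * Dfun n f' L xstar w :=
  Ve_pIS_bound_general d n f f' L hgrad hconv hLpos hsmooth xstar hmin x w
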